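/- arXiv:2309.03369 — 2 statements merged into one kernel-verified Lean document; each statement's English description precedes it below -/
import Mathlib

section
/- In the setting of the previous bound with all local dimensions equal, dᵢ = d for all i and n ≥ 4: for any pure state ρ on (ℂ^d)^{⊗n} with d^{n−2} ≥ 1, the bound on the full correlation tensor satisfies ‖T^{(1⋯n)}‖² ≤ d^n − (n/(n−1)) d^{n−2} + 1/(n−1) + (1/(n−2))(n/(n−1) − (n/(n−1)) d^{n−2}), and in particular the improvement over the bound d^n − (n/(n−1))d^{n−2} + 1/(n−1) is at least (n/((n−1)(n−2)))(d^{n−2} − 1). -/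
open Matrix

/-- The Weyl operator `A_{ij} = ∑_{m ∈ ℤ_d} ω^{im} E_{m, m+j}` on `ℂ^d`. -/
noncomputable def Weyl (d : ℕ) [NeZero d] (ω : ℂ) (i j : ZMod d) :
    Matrix (ZMod d) (ZMod d) ℂ :=
  ∑ m : ZMod d, (ω ^ (i * m).val) • Matrix.single m (m + j) (1 : ℂ)

/-- Tensor product of Weyl operators on `ℂ^{d₁} ⊗ ⋯ ⊗ ℂ^{dₙ}`, one factor per
party (the index `(0,0)` gives the identity on that factor). -/
noncomputable def WeylT (n : ℕ) (d : Fin n → ℕ) [∀ i, NeZero (d i)] (ω : Fin n → ℂ)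
    (a : ∀ i, ZMod (d i) × ZMod (d i)) :
    Matrix (∀ i, ZMod (d i)) (∀ i, ZMod (d i)) ℂ :=
  Matrix.of fun x y => ∏ i, (Weyl (d i) (ω i) (a i).1 (a i).2) (x i) (y i)

/-- Correlation coefficient of an `n`-partite state at a Weyl multi-index. -/
noncomputable def corrN (n : ℕ) (d : Fin n → ℕ) [∀ i, NeZero (d i)] (ω : Fin n → ℂ)
    (ρ : Matrix (∀ i, ZMod (d i)) (∀ i, ZMod (d i)) ℂ)
    (a : ∀ i, ZMod (d i) × ZMod (d i)) : ℂ :=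
  Matrix.trace (ρ * (WeylT n d ω a)ᴴ)

/-- `Asum s = ∑_{i₁<⋯<iₛ} ‖T^{(i₁⋯iₛ)}‖²`, the total squared norm of all
`s`-body correlation tensors: the sum of `|corr|²` over Weyl multi-indices with
exactly `s` nonidentity components. -/
noncomputable def Asum (n : ℕ) (d : Fin n → ℕ) [∀ i, NeZero (d i)] (ω : Fin n → ℂ)
    (ρ : Matrix (∀ i, ZMod (d i)) (∀ i, ZMod (d i)) ℂ) (s : ℕ) : ℝ :=
  ∑ a ∈ Finset.univ.filter
      (fun a : ∀ i, ZMod (d i) × ZMod (d i) =>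
        (Finset.univ.filter fun i => a i ≠ 0).card = s),
    ‖corrN n d ω ρ a‖ ^ 2



open Finset Complex

namespace FCT

variable {d : ℕ} [NeZero d]

noncomputable def ee (ζ : ℂ) (z : ZMod d) : ℂ := ζ ^ z.val

lemma ee_zero (ζ : ℂ) : ee (d := d) ζ 0 = 1 := by
  simp [ee, ZMod.val_zero]

lemma ee_add {ζ : ℂ} (h1 : ζ ^ d = 1) (a b : ZMod d) :
    ee ζ (a + b) = ee ζ a * ee ζ b := by
  unfold ee
  rw [ZMod.val_add, ← pow_eq_pow_mod _ h1, pow_add]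

lemma norm_ee {ζ : ℂ} (h : IsPrimitiveRoot ζ d) (z : ZMod d) : ‖ee ζ z‖ = 1 := by
  have h1 : ζ ^ d = 1 := h.pow_eq_one
  have hz : ‖ζ‖ = 1 := by
    have hpow : ‖ζ‖ ^ d = 1 := by
      rw [← norm_pow, h1, norm_one]
    rcases lt_trichotomy ‖ζ‖ 1 with hlt | heq | hgt
    · exact absurd hpow (by have := pow_lt_one₀ (norm_nonneg ζ) hlt (NeZero.ne d); linarith)
    · exact heq
    · exact absurd hpow (by have := one_lt_pow₀ hgt (NeZero.ne d); linarith)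
  simp [ee, norm_pow, hz]

lemma conj_ee {ζ : ℂ} (h : IsPrimitiveRoot ζ d) (z : ZMod d) :
    (starRingEnd ℂ) (ee ζ z) = ee ζ (-z) := by
  have h1 : ee ζ z * ee ζ (-z) = 1 := by
    rw [← ee_add h.pow_eq_one, add_neg_cancel, ee_zero]
  rw [← Complex.inv_eq_conj (norm_ee h z)]
  exact (eq_inv_of_mul_eq_one_right h1).symm

lemma sum_ee {ζ : ℂ} (h : IsPrimitiveRoot ζ d) {c : ZMod d} (hc : c ≠ 0) :
    ∑ u : ZMod d, ee ζ (u * c) = 0 := by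
  have key : ∀ u : ZMod d, ee ζ (u * c) = (ζ ^ c.val) ^ u.val := by
    intro u
    unfold ee
    rw [ZMod.val_mul, ← pow_eq_pow_mod _ h.pow_eq_one, ← pow_mul, mul_comm]
  simp only [key]
  have hbij : ∑ u : ZMod d, (ζ ^ c.val) ^ u.val = ∑ k ∈ Finset.range d, (ζ ^ c.val) ^ k := by
    refine Finset.sum_nbij' (fun u => u.val) (fun k => (k : ZMod d)) ?_ ?_ ?_ ?_ ?_
    · intro u _; exact Finset.mem_range.2 (ZMod.val_lt u)
    · intro k _; exact Finset.mem_univ _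
    · intro u _; exact ZMod.natCast_rightInverse u
    · intro k hk; exact ZMod.val_cast_of_lt (Finset.mem_range.1 hk)
    · intro u _; rfl
  rw [hbij]
  have hzne : ζ ^ c.val ≠ 1 := by
    apply h.pow_ne_one_of_pos_of_lt
    · exact (fun hh => hc ((ZMod.val_eq_zero c).1 hh))
    · exact ZMod.val_lt c
  rw [geom_sum_eq hzne]
  have : (ζ ^ c.val) ^ d = 1 := by
    rw [← pow_mul, mul_comm, pow_mul, h.pow_eq_one, one_pow]
  rw [this]
  simp

lemma orth1 {ζ : ℂ} (h : IsPrimitiveRoot ζ d) (x y : ZMod d) :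
    ∑ u : ZMod d, ee ζ (u * x) * (starRingEnd ℂ) (ee ζ (u * y)) =
      if x = y then (d : ℂ) else 0 := by
  have key : ∀ u : ZMod d, ee ζ (u * x) * (starRingEnd ℂ) (ee ζ (u * y)) = ee ζ (u * (x - y)) := by
    intro u
    rw [conj_ee h, ← ee_add h.pow_eq_one]
    ring_nf
  simp only [key]
  by_cases hxy : x = y
  · subst hxy
    simp [ee_zero, Finset.card_univ, ZMod.card]
  · rw [if_neg hxy]
    exact sum_ee h (sub_ne_zero.2 hxy)


lemma norm_sq_eq_mul_conj (z : ℂ) : ((‖z‖ ^ 2 : ℝ) : ℂ) = z * (starRingEnd ℂ) z := by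
  rw [Complex.mul_conj, Complex.normSq_eq_norm_sq]

lemma parseval {γ β : Type*} [Fintype γ] [Fintype β] [DecidableEq β]
    (χ : γ → β → ℂ) (c : ℝ)
    (diag : ∀ x : β, ∑ g : γ, χ g x * (starRingEnd ℂ) (χ g x) = (c : ℂ))
    (off : ∀ x y : β, x ≠ y → ∑ g : γ, χ g x * (starRingEnd ℂ) (χ g y) = 0)
    (f : β → ℂ) :
    ∑ g : γ, ‖∑ x : β, f x * (starRingEnd ℂ) (χ g x)‖ ^ 2 = c * ∑ x : β, ‖f x‖ ^ 2 := by
  apply Complex.ofReal_injective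
  rw [Complex.ofReal_mul, Complex.ofReal_sum, Complex.ofReal_sum]
  simp only [norm_sq_eq_mul_conj]
  calc ∑ g : γ, (∑ x : β, f x * (starRingEnd ℂ) (χ g x)) *
        (starRingEnd ℂ) (∑ x : β, f x * (starRingEnd ℂ) (χ g x))
      = ∑ g : γ, ∑ x : β, ∑ y : β,
          (f x * (starRingEnd ℂ) (f y)) * (χ g y * (starRingEnd ℂ) (χ g x)) := by
        refine Finset.sum_congr rfl fun g _ => ?_
        rw [map_sum, Finset.sum_mul_sum]
        refine Finset.sum_congr rfl fun x _ => Finset.sum_congr rfl fun y _ => ?_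
        simp only [_root_.map_mul, Complex.conj_conj]
        ring
    _ = ∑ x : β, ∑ y : β, (f x * (starRingEnd ℂ) (f y)) *
          ∑ g : γ, χ g y * (starRingEnd ℂ) (χ g x) := by
        rw [Finset.sum_comm]
        refine Finset.sum_congr rfl fun x _ => ?_
        rw [Finset.sum_comm]
        refine Finset.sum_congr rfl fun y _ => ?_
        rw [Finset.mul_sum]
    _ = ∑ x : β, (f x * (starRingEnd ℂ) (f x)) * (c : ℂ) := by
        refine Finset.sum_congr rfl fun x _ => ?_
        rw [Finset.sum_eq_single x]
        · rw [diag x]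
        · intro y _ hy
          rw [off y x hy, mul_zero]
        · intro hx; exact absurd (Finset.mem_univ x) hx
    _ = (c : ℂ) * ∑ x : β, f x * (starRingEnd ℂ) (f x) := by
        rw [Finset.mul_sum]; exact Finset.sum_congr rfl fun x _ => mul_comm _ _

lemma orthPi {ι : Type*} [Fintype ι] [DecidableEq ι] (ζ : ι → ℂ)
    (hζ : ∀ k, IsPrimitiveRoot (ζ k) d) (x y : ι → ZMod d) :
    ∑ p : ι → ZMod d,
      (∏ k, ee (ζ k) (p k * x k)) * (starRingEnd ℂ) (∏ k, ee (ζ k) (p k * y k)) =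
      if x = y then (((d : ℝ) ^ Fintype.card ι : ℝ) : ℂ) else 0 := by
  have step1 : ∀ p : ι → ZMod d,
      (∏ k, ee (ζ k) (p k * x k)) * (starRingEnd ℂ) (∏ k, ee (ζ k) (p k * y k)) =
      ∏ k, (ee (ζ k) (p k * x k) * (starRingEnd ℂ) (ee (ζ k) (p k * y k))) := by
    intro p
    rw [map_prod, Finset.prod_mul_distrib]
  simp only [step1]
  have expand := Finset.prod_univ_sum (fun _ : ι => (Finset.univ : Finset (ZMod d)))
    (fun k u => ee (ζ k) (u * x k) * (starRingEnd ℂ) (ee (ζ k) (u * y k)))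
  rw [Fintype.piFinset_univ] at expand
  rw [← expand]
  have hfac : ∀ k : ι, (∑ u : ZMod d, ee (ζ k) (u * x k) * (starRingEnd ℂ) (ee (ζ k) (u * y k)))
      = if x k = y k then (d : ℂ) else 0 := fun k => orth1 (hζ k) _ _
  rw [Finset.prod_congr rfl (fun k _ => hfac k)]
  by_cases hxy : x = y
  · subst hxy
    rw [if_pos rfl]
    simp only [if_pos rfl, Finset.prod_const, Finset.card_univ]
    push_cast
    rfl
  · rw [if_neg hxy]
    obtain ⟨k, hk⟩ := Function.ne_iff.1 hxy
    exact Finset.prod_eq_zero (Finset.mem_univ k) (if_neg hk)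

noncomputable def chiPi {ι : Type*} [Fintype ι] (ζ : ι → ℂ) (p x : ι → ZMod d) : ℂ :=
  ∏ k, ee (ζ k) (p k * x k)

lemma parsevalPi {ι : Type*} [Fintype ι] [DecidableEq ι] (ζ : ι → ℂ)
    (hζ : ∀ k, IsPrimitiveRoot (ζ k) d) (f : (ι → ZMod d) → ℂ) :
    ∑ p : ι → ZMod d, ‖∑ x : ι → ZMod d, f x * (starRingEnd ℂ) (∏ k, ee (ζ k) (p k * x k))‖ ^ 2
      = (d : ℝ) ^ Fintype.card ι * ∑ x : ι → ZMod d, ‖f x‖ ^ 2 := by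
  have h := parseval (chiPi ζ) ((d : ℝ) ^ Fintype.card ι)
    (fun x => by simp only [chiPi]; rw [orthPi ζ hζ x x, if_pos rfl])
    (fun x y hxy => by simp only [chiPi]; rw [orthPi ζ hζ x y, if_neg hxy]) f
  simpa only [chiPi] using h

lemma parseval1 {ζ : ℂ} (hζ : IsPrimitiveRoot ζ d) (f : ZMod d → ℂ) :
    ∑ u : ZMod d, ‖∑ v : ZMod d, f v * (starRingEnd ℂ) (ee ζ (u * v))‖ ^ 2
      = (d : ℝ) * ∑ v : ZMod d, ‖f v‖ ^ 2 :=
  parseval (fun u v => ee ζ (u * v)) (d : ℝ)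
    (fun x => by rw [orth1 hζ x x, if_pos rfl]; norm_cast)
    (fun x y hxy => by rw [orth1 hζ x y, if_neg hxy]) f

lemma sum4_swap {α₁ α₂ α₃ α₄ M : Type*} [Fintype α₁] [Fintype α₂] [Fintype α₃]
    [Fintype α₄] [AddCommMonoid M] (g : α₁ → α₂ → α₃ → α₄ → M) :
    ∑ a : α₁, ∑ b : α₂, ∑ c : α₃, ∑ e : α₄, g a b c e
      = ∑ c : α₃, ∑ e : α₄, ∑ a : α₁, ∑ b : α₂, g a b c e := by
  have e1 : ∑ a : α₁, ∑ b : α₂, ∑ c : α₃, ∑ e : α₄, g a b c e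
      = ∑ p : α₁ × α₂, ∑ q : α₃ × α₄, g p.1 p.2 q.1 q.2 := by
    rw [Fintype.sum_prod_type]
    exact Finset.sum_congr rfl fun a _ => Finset.sum_congr rfl fun b _ =>
      (Fintype.sum_prod_type (fun q : α₃ × α₄ => g (a, b).1 (a, b).2 q.1 q.2)).symm
  have e2 : ∑ c : α₃, ∑ e : α₄, ∑ a : α₁, ∑ b : α₂, g a b c e
      = ∑ q : α₃ × α₄, ∑ p : α₁ × α₂, g p.1 p.2 q.1 q.2 := by
    rw [Fintype.sum_prod_type]
    exact Finset.sum_congr rfl fun q _ => Finset.sum_congr rfl fun e _ =>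
      (Fintype.sum_prod_type (fun p : α₁ × α₂ => g p.1 p.2 (q, e).1 (q, e).2)).symm
  rw [e1, e2, Finset.sum_comm]

lemma gram_swap {β γ : Type*} [Fintype β] [Fintype γ] (f : β → γ → ℂ) :
    ∑ x : γ, ∑ y : γ, ‖∑ v : β, f v x * (starRingEnd ℂ) (f v y)‖ ^ 2
      = ∑ v : β, ∑ w : β, ‖∑ x : γ, f v x * (starRingEnd ℂ) (f w x)‖ ^ 2 := by
  apply Complex.ofReal_injective
  rw [Complex.ofReal_sum, Complex.ofReal_sum]
  simp only [Complex.ofReal_sum, norm_sq_eq_mul_conj]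
  have lhs : ∀ x y : γ, (∑ v : β, f v x * (starRingEnd ℂ) (f v y)) *
      (starRingEnd ℂ) (∑ w : β, f w x * (starRingEnd ℂ) (f w y))
      = ∑ v : β, ∑ w : β, (f v x * (starRingEnd ℂ) (f v y)) *
          ((starRingEnd ℂ) (f w x) * f w y) := by
    intro x y
    rw [map_sum, Finset.sum_mul_sum]
    refine Finset.sum_congr rfl fun v _ => Finset.sum_congr rfl fun w _ => ?_
    simp only [_root_.map_mul, Complex.conj_conj]
  have rhs : ∀ v w : β, (∑ x : γ, f v x * (starRingEnd ℂ) (f w x)) *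
      (starRingEnd ℂ) (∑ y : γ, f v y * (starRingEnd ℂ) (f w y))
      = ∑ x : γ, ∑ y : γ, (f v x * (starRingEnd ℂ) (f w x)) *
          ((starRingEnd ℂ) (f v y) * f w y) := by
    intro v w
    rw [map_sum, Finset.sum_mul_sum]
    refine Finset.sum_congr rfl fun x _ => Finset.sum_congr rfl fun y _ => ?_
    simp only [_root_.map_mul, Complex.conj_conj]
  simp only [lhs, rhs]
  rw [sum4_swap]
  refine Finset.sum_congr rfl fun v _ => Finset.sum_congr rfl fun w _ =>
    Finset.sum_congr rfl fun x _ => Finset.sum_congr rfl fun y _ => ?_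
  ring

end FCT

namespace FCT

def spl {n : ℕ} (i : Fin n) (α : Type*) :
    (Fin n → α) ≃ α × ({k : Fin n // k ≠ i} → α) where
  toFun x := (x i, fun k => x k.1)
  invFun p := fun k => if h : k = i then p.1 else p.2 ⟨k, h⟩
  left_inv x := by
    funext k
    by_cases h : k = i
    · subst h; simp
    · simp [h]
  right_inv p := by
    refine Prod.ext ?_ ?_
    · simp
    · funext k
      simp [k.2]

lemma spl_symm_apply {n : ℕ} (i : Fin n) {α : Type*} (p : α × ({k : Fin n // k ≠ i} → α))
    (k : Fin n) : (spl i α).symm p k = if h : k = i then p.1 else p.2 ⟨k, h⟩ := rfl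

lemma spl_symm_add {n : ℕ} (i : Fin n) {α : Type*} [Add α]
    (v w : α) (f g : {k : Fin n // k ≠ i} → α) :
    (spl i α).symm (v, f) + (spl i α).symm (w, g) = (spl i α).symm (v + w, f + g) := by
  funext k
  by_cases h : k = i <;> simp [spl_symm_apply, h, Pi.add_apply]

section Corr

variable {n d : ℕ} [NeZero d] (ω : Fin n → ℂ) (ψ : (Fin n → ZMod d) → ℂ)

noncomputable def corrF (a : Fin n → ZMod d × ZMod d) : ℂ :=
  ∑ x : Fin n → ZMod d, ψ x * (starRingEnd ℂ) (ψ (x + fun k => (a k).2)) *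
    (starRingEnd ℂ) (∏ k, ee (ω k) ((a k).1 * x k))

lemma Weyl_apply (ζ : ℂ) (i j x y : ZMod d) :
    Weyl d ζ i j x y = if y = x + j then ζ ^ (i * x).val else 0 := by
  unfold Weyl
  rw [Matrix.sum_apply]
  have hterm : ∀ m : ZMod d, (ζ ^ (i * m).val • Matrix.single m (m + j) (1 : ℂ)) x y
      = if m = x ∧ m + j = y then ζ ^ (i * m).val else 0 := by
    intro m
    by_cases h : m = x ∧ m + j = y
    · simp [Matrix.single, Matrix.smul_apply, h]
    · simp only [Matrix.smul_apply, Matrix.single, Matrix.of_apply, if_neg h,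
        smul_zero]
  rw [Finset.sum_congr rfl (fun m _ => hterm m), Finset.sum_eq_single x]
  · by_cases h : y = x + j
    · rw [if_pos ⟨rfl, h.symm⟩, if_pos h]
    · rw [if_neg (fun hh => h hh.2.symm), if_neg h]
  · intro m _ hm
    rw [if_neg (fun hh => hm hh.1)]
  · intro h; exact absurd (Finset.mem_univ x) h

lemma WeylT_apply (a : Fin n → ZMod d × ZMod d) (x y : Fin n → ZMod d) :
    WeylT n (fun _ => d) ω a x y
      = if y = x + (fun k => (a k).2) then ∏ k, ee (ω k) ((a k).1 * x k) else 0 := by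
  show (∏ k, (Weyl d (ω k) (a k).1 (a k).2) (x k) (y k)) = _
  rw [Finset.prod_congr rfl (fun k _ => Weyl_apply (ω k) (a k).1 (a k).2 (x k) (y k))]
  by_cases h : y = x + fun k => (a k).2
  · rw [if_pos h]
    refine Finset.prod_congr rfl fun k _ => ?_
    rw [if_pos (by rw [h]; rfl)]
    rfl
  · rw [if_neg h]
    obtain ⟨k, hk⟩ := Function.ne_iff.1 h
    exact Finset.prod_eq_zero (Finset.mem_univ k) (if_neg hk)

lemma corrN_eq (ρ : Matrix (∀ _ : Fin n, ZMod d) (∀ _ : Fin n, ZMod d) ℂ)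
    (hρ : ρ = Matrix.vecMulVec ψ (star ψ)) (a : Fin n → ZMod d × ZMod d) :
    corrN n (fun _ => d) ω ρ a = corrF ω ψ a := by
  subst hρ
  show ∑ x, (Matrix.vecMulVec ψ (star ψ) * (WeylT n (fun _ => d) ω a)ᴴ) x x = _
  unfold corrF
  refine Finset.sum_congr rfl fun x _ => ?_
  rw [Matrix.mul_apply]
  have key : ∀ y, Matrix.vecMulVec ψ (star ψ) x y * (WeylT n (fun _ => d) ω a)ᴴ y x
      = if y = x + (fun k => (a k).2) then
          ψ x * (starRingEnd ℂ) (ψ y) * (starRingEnd ℂ) (∏ k, ee (ω k) ((a k).1 * x k))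
        else 0 := by
    intro y
    rw [Matrix.conjTranspose_apply, Matrix.vecMulVec_apply, WeylT_apply]
    by_cases h : y = x + fun k => (a k).2
    · rw [if_pos h, if_pos h]
      simp only [Pi.star_apply, RCLike.star_def]
    · rw [if_neg h, if_neg h, star_zero, mul_zero]
  rw [Finset.sum_congr rfl (fun y _ => key y),
    Finset.sum_ite_eq' Finset.univ (x + fun k => (a k).2), if_pos (Finset.mem_univ _)]

end Corr

end FCT

namespace FCT

section Tot

variable {n d : ℕ} [NeZero d] (ω : Fin n → ℂ) (ψ : (Fin n → ZMod d) → ℂ)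

lemma norm_mul_conj_sq (z w : ℂ) : ‖z * (starRingEnd ℂ) w‖ ^ 2 = ‖z‖ ^ 2 * ‖w‖ ^ 2 := by
  rw [norm_mul, RCLike.norm_conj, mul_pow]

lemma corrF_zero (hψ : ∑ v, ‖ψ v‖ ^ 2 = 1) : corrF ω ψ 0 = 1 := by
  unfold corrF
  have h1 : ∀ x : Fin n → ZMod d,
      ψ x * (starRingEnd ℂ) (ψ (x + fun k => ((0 : Fin n → ZMod d × ZMod d) k).2)) *
        (starRingEnd ℂ) (∏ k, ee (ω k) (((0 : Fin n → ZMod d × ZMod d) k).1 * x k))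
      = ((‖ψ x‖ ^ 2 : ℝ) : ℂ) := by
    intro x
    have hx : (x + fun k => ((0 : Fin n → ZMod d × ZMod d) k).2) = x := by
      funext k; simp
    have hp : (∏ k, ee (ω k) (((0 : Fin n → ZMod d × ZMod d) k).1 * x k)) = 1 := by
      refine Finset.prod_eq_one fun k _ => ?_
      simp [ee_zero]
    rw [hx, hp, _root_.map_one, mul_one, norm_sq_eq_mul_conj]
  rw [Finset.sum_congr rfl (fun x _ => h1 x), ← Complex.ofReal_sum, hψ, Complex.ofReal_one]

lemma sum_total (hω : ∀ i, IsPrimitiveRoot (ω i) d) (hψ : ∑ v, ‖ψ v‖ ^ 2 = 1) :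
    ∑ a : Fin n → ZMod d × ZMod d, ‖corrF ω ψ a‖ ^ 2 = (d : ℝ) ^ n := by
  set τ := Equiv.arrowProdEquivProdArrow (Fin n) (fun _ => ZMod d) (fun _ => ZMod d) with hτ
  have hre := Equiv.sum_comp τ.symm (fun a : Fin n → ZMod d × ZMod d => ‖corrF ω ψ a‖ ^ 2)
  rw [← hre, Fintype.sum_prod_type, Finset.sum_comm]
  have key : ∀ q p : Fin n → ZMod d,
      corrF ω ψ (τ.symm (p, q))
        = ∑ x : Fin n → ZMod d, (ψ x * (starRingEnd ℂ) (ψ (x + q))) *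
            (starRingEnd ℂ) (∏ k, ee (ω k) (p k * x k)) := by
    intro q p
    unfold corrF
    rfl
  have inner : ∀ q : Fin n → ZMod d,
      ∑ p : Fin n → ZMod d, ‖corrF ω ψ (τ.symm (p, q))‖ ^ 2
        = (d : ℝ) ^ n * ∑ x : Fin n → ZMod d, ‖ψ x * (starRingEnd ℂ) (ψ (x + q))‖ ^ 2 := by
    intro q
    rw [Finset.sum_congr rfl (fun p _ => by rw [key q p])]
    have h := parsevalPi ω hω (fun x => ψ x * (starRingEnd ℂ) (ψ (x + q)))
    rwa [Fintype.card_fin] at h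
  rw [Finset.sum_congr rfl (fun q _ => inner q), ← Finset.mul_sum]
  have last : ∑ q : Fin n → ZMod d, ∑ x : Fin n → ZMod d,
      ‖ψ x * (starRingEnd ℂ) (ψ (x + q))‖ ^ 2 = 1 := by
    rw [Finset.sum_comm]
    have hx : ∀ x : Fin n → ZMod d,
        ∑ q : Fin n → ZMod d, ‖ψ x * (starRingEnd ℂ) (ψ (x + q))‖ ^ 2 = ‖ψ x‖ ^ 2 := by
      intro x
      have : ∀ q : Fin n → ZMod d, ‖ψ x * (starRingEnd ℂ) (ψ (x + q))‖ ^ 2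
          = ‖ψ x‖ ^ 2 * ‖ψ (x + q)‖ ^ 2 := fun q => norm_mul_conj_sq _ _
      rw [Finset.sum_congr rfl (fun q _ => this q), ← Finset.mul_sum]
      have hbij := Equiv.sum_comp (Equiv.addLeft x) (fun v : Fin n → ZMod d => ‖ψ v‖ ^ 2)
      simp only [Equiv.coe_addLeft] at hbij
      rw [hbij, hψ, mul_one]
    rw [Finset.sum_congr rfl (fun x _ => hx x), hψ]
  rw [last, mul_one]

end Tot

end FCT

namespace FCT

section PerParty

variable {n d : ℕ} [NeZero d] (ω : Fin n → ℂ) (ψ : (Fin n → ZMod d) → ℂ)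

noncomputable def psiS (i : Fin n) (v : ZMod d)
    (x' : {k : Fin n // k ≠ i} → ZMod d) : ℂ :=
  ψ ((spl i (ZMod d)).symm (v, x'))

lemma sum_RHS (hω : ∀ k, IsPrimitiveRoot (ω k) d) (i : Fin n) :
    ∑ a ∈ Finset.univ.filter
        (fun a : Fin n → ZMod d × ZMod d => ∀ k, k ≠ i → a k = 0), ‖corrF ω ψ a‖ ^ 2
      = (d : ℝ) * ∑ v : ZMod d, ∑ w : ZMod d,
          ‖∑ x' : {k : Fin n // k ≠ i} → ZMod d,
            psiS ψ i v x' * (starRingEnd ℂ) (psiS ψ i w x')‖ ^ 2 := by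
  classical
  -- Step 1: reindex the filtered sum by c : ZMod d × ZMod d
  have step1 : ∑ a ∈ Finset.univ.filter
        (fun a : Fin n → ZMod d × ZMod d => ∀ k, k ≠ i → a k = 0), ‖corrF ω ψ a‖ ^ 2
      = ∑ c : ZMod d × ZMod d,
          ‖corrF ω ψ ((spl i (ZMod d × ZMod d)).symm (c, 0))‖ ^ 2 := by
    refine Finset.sum_nbij' (fun a => a i) (fun c => (spl i (ZMod d × ZMod d)).symm (c, 0))
      ?_ ?_ ?_ ?_ ?_
    · intro a _; exact Finset.mem_univ _
    · intro c _
      refine Finset.mem_filter.2 ⟨Finset.mem_univ _, fun k hk => ?_⟩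
      rw [spl_symm_apply, dif_neg hk]; rfl
    · intro a ha
      obtain ⟨-, ha2⟩ := Finset.mem_filter.1 ha
      funext k
      rw [spl_symm_apply]
      by_cases h : k = i
      · subst h; rw [dif_pos rfl]
      · rw [dif_neg h, ha2 k h]; rfl
    · intro c _
      rw [spl_symm_apply, dif_pos rfl]
    · intro a ha
      obtain ⟨-, ha2⟩ := Finset.mem_filter.1 ha
      have hrec : (spl i (ZMod d × ZMod d)).symm (a i, 0) = a := by
        funext k
        rw [spl_symm_apply]
        by_cases h : k = i
        · subst h; rw [dif_pos rfl]
        · rw [dif_neg h, ha2 k h]; rfl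
      rw [hrec]
  rw [step1]
  -- Step 2: compute corrF at such indices
  have hcorr : ∀ c : ZMod d × ZMod d,
      corrF ω ψ ((spl i (ZMod d × ZMod d)).symm (c, 0))
        = ∑ v : ZMod d,
            (∑ x' : {k : Fin n // k ≠ i} → ZMod d,
              psiS ψ i v x' * (starRingEnd ℂ) (psiS ψ i (v + c.2) x'))
            * (starRingEnd ℂ) (ee (ω i) (c.1 * v)) := by
    intro c
    set A := (spl i (ZMod d × ZMod d)).symm (c, 0) with hA
    unfold corrF
    rw [← Equiv.sum_comp (spl i (ZMod d)).symm
      (fun x => ψ x * (starRingEnd ℂ) (ψ (x + fun k => (A k).2)) *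
        (starRingEnd ℂ) (∏ k, ee (ω k) ((A k).1 * x k))), Fintype.sum_prod_type]
    refine Finset.sum_congr rfl fun v _ => ?_
    rw [Finset.sum_mul]
    refine Finset.sum_congr rfl fun x' _ => ?_
    have hj : (fun k => (A k).2) = (spl i (ZMod d)).symm (c.2, 0) := by
      funext k
      rw [hA, spl_symm_apply, spl_symm_apply]
      by_cases h : k = i
      · subst h; rw [dif_pos rfl, dif_pos rfl]
      · rw [dif_neg h, dif_neg h]; rfl
    have hadd : (spl i (ZMod d)).symm (v, x') + (spl i (ZMod d)).symm (c.2, 0)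
        = (spl i (ZMod d)).symm (v + c.2, x') := by
      rw [spl_symm_add]; congr 1; rw [Prod.mk.injEq]; exact ⟨rfl, add_zero x'⟩
    have hprod : (∏ k, ee (ω k) ((A k).1 * ((spl i (ZMod d)).symm (v, x')) k))
        = ee (ω i) (c.1 * v) := by
      rw [← Finset.mul_prod_erase Finset.univ _ (Finset.mem_univ i)]
      have h1 : ee (ω i) ((A i).1 * ((spl i (ZMod d)).symm (v, x')) i) = ee (ω i) (c.1 * v) := by
        rw [hA, spl_symm_apply, spl_symm_apply, dif_pos rfl, dif_pos rfl]
      have h2 : ∏ k ∈ Finset.univ.erase i, ee (ω k) ((A k).1 * ((spl i (ZMod d)).symm (v, x')) k)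
          = 1 := by
        refine Finset.prod_eq_one fun k hk => ?_
        have hki : k ≠ i := (Finset.mem_erase.1 hk).1
        rw [hA, spl_symm_apply, dif_neg hki]
        show ee (ω k) ((0 : ZMod d × ZMod d).1 * _) = 1
        rw [Prod.fst_zero, zero_mul, ee_zero]
      rw [h1, h2, mul_one]
    rw [hj, hadd, hprod]
    rfl
  rw [Finset.sum_congr rfl (fun c _ => by rw [hcorr c])]
  -- Step 3: split c into (u, w), Parseval in u
  rw [Fintype.sum_prod_type, Finset.sum_comm]
  have hpars : ∀ w : ZMod d,
      ∑ u : ZMod d, ‖∑ v : ZMod d,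
          (∑ x' : {k : Fin n // k ≠ i} → ZMod d,
            psiS ψ i v x' * (starRingEnd ℂ) (psiS ψ i (v + w) x'))
          * (starRingEnd ℂ) (ee (ω i) (u * v))‖ ^ 2
        = (d : ℝ) * ∑ v : ZMod d, ‖∑ x' : {k : Fin n // k ≠ i} → ZMod d,
            psiS ψ i v x' * (starRingEnd ℂ) (psiS ψ i (v + w) x')‖ ^ 2 :=
    fun w => parseval1 (hω i) _
  rw [Finset.sum_congr rfl (fun w _ => hpars w), ← Finset.mul_sum]
  congr 1
  -- Step 4: reindex w ↦ v + w
  rw [Finset.sum_comm]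
  refine Finset.sum_congr rfl fun v _ => ?_
  have hbij := Equiv.sum_comp (Equiv.addLeft v)
    (fun w : ZMod d => ‖∑ x' : {k : Fin n // k ≠ i} → ZMod d,
      psiS ψ i v x' * (starRingEnd ℂ) (psiS ψ i w x')‖ ^ 2)
  simp only [Equiv.coe_addLeft] at hbij
  rw [← hbij]

end PerParty

end FCT

namespace FCT

section PerParty2

variable {n d : ℕ} [NeZero d] (ω : Fin n → ℂ) (ψ : (Fin n → ZMod d) → ℂ)

lemma sum_LHS (hω : ∀ k, IsPrimitiveRoot (ω k) d) (i : Fin n) :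
    ∑ a ∈ Finset.univ.filter
        (fun a : Fin n → ZMod d × ZMod d => a i = 0), ‖corrF ω ψ a‖ ^ 2
      = (d : ℝ) ^ (n - 1) * ∑ x' : {k : Fin n // k ≠ i} → ZMod d,
          ∑ y' : {k : Fin n // k ≠ i} → ZMod d,
          ‖∑ v : ZMod d, psiS ψ i v x' * (starRingEnd ℂ) (psiS ψ i v y')‖ ^ 2 := by
  classical
  -- Step 1: reindex onto b : {k // k ≠ i} → ZMod d × ZMod d
  have step1 : ∑ a ∈ Finset.univ.filter
        (fun a : Fin n → ZMod d × ZMod d => a i = 0), ‖corrF ω ψ a‖ ^ 2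
      = ∑ b : {k : Fin n // k ≠ i} → ZMod d × ZMod d,
          ‖corrF ω ψ ((spl i (ZMod d × ZMod d)).symm (0, b))‖ ^ 2 := by
    refine Finset.sum_nbij' (fun a => fun k : {k : Fin n // k ≠ i} => a k.1)
      (fun b => (spl i (ZMod d × ZMod d)).symm (0, b)) ?_ ?_ ?_ ?_ ?_
    · intro a _; exact Finset.mem_univ _
    · intro b _
      refine Finset.mem_filter.2 ⟨Finset.mem_univ _, ?_⟩
      rw [spl_symm_apply, dif_pos rfl]
    · intro a ha
      have ha2 : a i = 0 := (Finset.mem_filter.1 ha).2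
      funext k
      rw [spl_symm_apply]
      by_cases h : k = i
      · subst h; rw [dif_pos rfl, ha2]
      · rw [dif_neg h]
    · intro b _
      funext k
      rw [spl_symm_apply, dif_neg k.2]
    · intro a ha
      have ha2 : a i = 0 := (Finset.mem_filter.1 ha).2
      have hrec : (spl i (ZMod d × ZMod d)).symm (0, fun k : {k : Fin n // k ≠ i} => a k.1)
          = a := by
        funext k
        rw [spl_symm_apply]
        by_cases h : k = i
        · subst h; rw [dif_pos rfl, ha2]
        · rw [dif_neg h]
      rw [hrec]
  rw [step1]
  -- Step 2: compute corrF at such indices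
  have hcorr : ∀ b : {k : Fin n // k ≠ i} → ZMod d × ZMod d,
      corrF ω ψ ((spl i (ZMod d × ZMod d)).symm (0, b))
        = ∑ x' : {k : Fin n // k ≠ i} → ZMod d,
            (∑ v : ZMod d,
              psiS ψ i v x' * (starRingEnd ℂ) (psiS ψ i v (x' + fun k => (b k).2)))
            * (starRingEnd ℂ) (∏ k : {k : Fin n // k ≠ i}, ee (ω k.1) ((b k).1 * x' k)) := by
    intro b
    set A := (spl i (ZMod d × ZMod d)).symm (0, b) with hA
    unfold corrF
    rw [← Equiv.sum_comp (spl i (ZMod d)).symm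
      (fun x => ψ x * (starRingEnd ℂ) (ψ (x + fun k => (A k).2)) *
        (starRingEnd ℂ) (∏ k, ee (ω k) ((A k).1 * x k))), Fintype.sum_prod_type,
      Finset.sum_comm]
    refine Finset.sum_congr rfl fun x' _ => ?_
    rw [Finset.sum_mul]
    refine Finset.sum_congr rfl fun v _ => ?_
    have hj : (fun k => (A k).2) = (spl i (ZMod d)).symm (0, fun k => (b k).2) := by
      funext k
      rw [hA, spl_symm_apply, spl_symm_apply]
      by_cases h : k = i
      · subst h; rw [dif_pos rfl, dif_pos rfl]; rfl
      · rw [dif_neg h, dif_neg h]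
    have hadd : (spl i (ZMod d)).symm (v, x') + (spl i (ZMod d)).symm (0, fun k => (b k).2)
        = (spl i (ZMod d)).symm (v, x' + fun k => (b k).2) := by
      rw [spl_symm_add]; congr 1; rw [Prod.mk.injEq]; exact ⟨add_zero v, rfl⟩
    have hprod : (∏ k, ee (ω k) ((A k).1 * ((spl i (ZMod d)).symm (v, x')) k))
        = ∏ k : {k : Fin n // k ≠ i}, ee (ω k.1) ((b k).1 * x' k) := by
      rw [← Finset.mul_prod_erase Finset.univ _ (Finset.mem_univ i)]
      have h1 : ee (ω i) ((A i).1 * ((spl i (ZMod d)).symm (v, x')) i) = 1 := by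
        rw [hA, spl_symm_apply, dif_pos rfl, Prod.fst_zero, zero_mul, ee_zero]
      have h2 : ∏ k ∈ Finset.univ.erase i, ee (ω k) ((A k).1 * ((spl i (ZMod d)).symm (v, x')) k)
          = ∏ k : {k : Fin n // k ≠ i}, ee (ω k.1) ((b k).1 * x' k) := by
        rw [Finset.prod_subtype (Finset.univ.erase i)
          (p := fun k : Fin n => k ≠ i) (fun k => by simp [Finset.mem_erase])
          (fun k => ee (ω k) ((A k).1 * ((spl i (ZMod d)).symm (v, x')) k))]
        refine Finset.prod_congr rfl fun k _ => ?_
        rw [hA, spl_symm_apply, spl_symm_apply, dif_neg k.2, dif_neg k.2]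
      rw [h1, one_mul, h2]
    rw [hj, hadd, hprod]
    rfl
  rw [Finset.sum_congr rfl (fun b _ => by rw [hcorr b])]
  -- Step 3: split b into (p', q')
  set τ := Equiv.arrowProdEquivProdArrow {k : Fin n // k ≠ i} (fun _ => ZMod d) (fun _ => ZMod d) with hτ
  have hre := Equiv.sum_comp τ.symm
    (fun b : {k : Fin n // k ≠ i} → ZMod d × ZMod d =>
      ‖∑ x' : {k : Fin n // k ≠ i} → ZMod d,
        (∑ v : ZMod d,
          psiS ψ i v x' * (starRingEnd ℂ) (psiS ψ i v (x' + fun k => (b k).2)))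
        * (starRingEnd ℂ) (∏ k : {k : Fin n // k ≠ i}, ee (ω k.1) ((b k).1 * x' k))‖ ^ 2)
  rw [← hre, Fintype.sum_prod_type, Finset.sum_comm]
  -- now inner sum over p', Parseval
  have hpars : ∀ q' : {k : Fin n // k ≠ i} → ZMod d,
      ∑ p' : {k : Fin n // k ≠ i} → ZMod d,
        ‖∑ x' : {k : Fin n // k ≠ i} → ZMod d,
          (∑ v : ZMod d, psiS ψ i v x' * (starRingEnd ℂ) (psiS ψ i v (x' + q')))
          * (starRingEnd ℂ) (∏ k : {k : Fin n // k ≠ i}, ee (ω k.1) (p' k * x' k))‖ ^ 2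
        = (d : ℝ) ^ (n - 1) * ∑ x' : {k : Fin n // k ≠ i} → ZMod d,
            ‖∑ v : ZMod d, psiS ψ i v x' * (starRingEnd ℂ) (psiS ψ i v (x' + q'))‖ ^ 2 := by
    intro q'
    have h := parsevalPi (fun k : {k : Fin n // k ≠ i} => ω k.1) (fun k => hω k.1)
      (fun x' => ∑ v : ZMod d, psiS ψ i v x' * (starRingEnd ℂ) (psiS ψ i v (x' + q')))
    have hcard : Fintype.card {k : Fin n // k ≠ i} = n - 1 := by
      rw [Fintype.card_subtype_compl, Fintype.card_subtype_eq, Fintype.card_fin]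
    rwa [hcard] at h
  have hmid : ∀ q' : {k : Fin n // k ≠ i} → ZMod d,
      (∑ p' : {k : Fin n // k ≠ i} → ZMod d,
        ‖∑ x' : {k : Fin n // k ≠ i} → ZMod d,
          (∑ v : ZMod d, psiS ψ i v x' *
            (starRingEnd ℂ) (psiS ψ i v (x' + fun k => ((τ.symm (p', q')) k).2)))
          * (starRingEnd ℂ) (∏ k : {k : Fin n // k ≠ i},
              ee (ω k.1) (((τ.symm (p', q')) k).1 * x' k))‖ ^ 2)
        = (d : ℝ) ^ (n - 1) * ∑ x' : {k : Fin n // k ≠ i} → ZMod d,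
            ‖∑ v : ZMod d, psiS ψ i v x' * (starRingEnd ℂ) (psiS ψ i v (x' + q'))‖ ^ 2 := by
    intro q'
    exact hpars q'
  rw [Finset.sum_congr rfl (fun q' _ => hmid q'), ← Finset.mul_sum]
  congr 1
  -- Step 4: reindex q' ↦ x' + q'
  rw [Finset.sum_comm]
  refine Finset.sum_congr rfl fun x' _ => ?_
  have hbij := Equiv.sum_comp (Equiv.addLeft x')
    (fun y' : {k : Fin n // k ≠ i} → ZMod d =>
      ‖∑ v : ZMod d, psiS ψ i v x' * (starRingEnd ℂ) (psiS ψ i v y')‖ ^ 2)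
  simp only [Equiv.coe_addLeft] at hbij
  rw [← hbij]

end PerParty2

end FCT

namespace FCT

section Count

variable {n d : ℕ} [NeZero d] (ω : Fin n → ℂ) (ψ : (Fin n → ZMod d) → ℂ)

lemma per_party (hn : 2 ≤ n) (hω : ∀ k, IsPrimitiveRoot (ω k) d) (i : Fin n) :
    ∑ a ∈ Finset.univ.filter
        (fun a : Fin n → ZMod d × ZMod d => a i = 0), ‖corrF ω ψ a‖ ^ 2
      = (d : ℝ) ^ (n - 2) * ∑ a ∈ Finset.univ.filter
          (fun a : Fin n → ZMod d × ZMod d => ∀ k, k ≠ i → a k = 0), ‖corrF ω ψ a‖ ^ 2 := by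
  rw [sum_LHS ω ψ hω i, sum_RHS ω ψ hω i, gram_swap (fun v x' => psiS ψ i v x'),
    ← mul_assoc]
  congr 1
  have h2 : n - 1 = (n - 2) + 1 := by omega
  rw [h2, pow_succ]

lemma swap_count (P : Fin n → (Fin n → ZMod d × ZMod d) → Prop)
    [∀ i a, Decidable (P i a)] (F : (Fin n → ZMod d × ZMod d) → ℝ) :
    ∑ i : Fin n, ∑ a ∈ Finset.univ.filter (P i), F a
      = ∑ a : Fin n → ZMod d × ZMod d,
          ((Finset.univ.filter (fun i => P i a)).card : ℝ) * F a := by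
  simp only [Finset.sum_filter]
  rw [Finset.sum_comm]
  refine Finset.sum_congr rfl fun a _ => ?_
  rw [← Finset.sum_filter, Finset.sum_const, nsmul_eq_mul]

lemma card_zero_filter (a : Fin n → ZMod d × ZMod d) :
    (Finset.univ.filter (fun i => a i = 0)).card
      = n - (Finset.univ.filter (fun i => a i ≠ 0)).card := by
  have h := Finset.card_filter_add_card_filter_not
    (s := (Finset.univ : Finset (Fin n))) (fun i => a i ≠ 0)
  simp only [not_not] at h
  rw [Finset.card_univ, Fintype.card_fin] at h
  omega

lemma s_le (a : Fin n → ZMod d × ZMod d) :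
    (Finset.univ.filter (fun i => a i ≠ 0)).card ≤ n := by
  calc (Finset.univ.filter (fun i => a i ≠ 0)).card ≤ (Finset.univ : Finset (Fin n)).card :=
        Finset.card_filter_le _ _
    _ = n := by rw [Finset.card_univ, Fintype.card_fin]

lemma s_zero : ((Finset.univ.filter
    (fun i => (0 : Fin n → ZMod d × ZMod d) i ≠ 0)).card) = 0 := by
  rw [Finset.card_eq_zero]
  refine Finset.filter_false_of_mem fun i _ => ?_
  simp

lemma s_pos (a : Fin n → ZMod d × ZMod d) (ha : a ≠ 0) :
    1 ≤ (Finset.univ.filter (fun i => a i ≠ 0)).card := by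
  rw [Nat.one_le_iff_ne_zero, Ne, Finset.card_eq_zero, ← Ne, ← Finset.nonempty_iff_ne_empty]
  by_contra h
  rw [Finset.not_nonempty_iff_eq_empty, Finset.filter_eq_empty_iff] at h
  exact ha (funext fun i => not_not.1 (h (Finset.mem_univ i)))

lemma c1_zero : ((Finset.univ.filter
    (fun i : Fin n => ∀ k, k ≠ i → (0 : Fin n → ZMod d × ZMod d) k = 0)).card) = n := by
  have he : (Finset.univ.filter
      (fun i : Fin n => ∀ k, k ≠ i → (0 : Fin n → ZMod d × ZMod d) k = 0)) = Finset.univ :=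
    Finset.filter_true_of_mem (fun i _ k _ => rfl)
  rw [he, Finset.card_univ, Fintype.card_fin]

lemma c1_of_s_one (a : Fin n → ZMod d × ZMod d)
    (h : (Finset.univ.filter (fun i => a i ≠ 0)).card = 1) :
    1 ≤ (Finset.univ.filter (fun i : Fin n => ∀ k, k ≠ i → a k = 0)).card := by
  obtain ⟨i₀, hi₀⟩ := Finset.card_eq_one.1 h
  refine Finset.card_pos.2 ⟨i₀, Finset.mem_filter.2 ⟨Finset.mem_univ _, fun k hk => ?_⟩⟩
  by_contra hak
  have : k ∈ Finset.univ.filter (fun i => a i ≠ 0) := Finset.mem_filter.2 ⟨Finset.mem_univ _, hak⟩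
  rw [hi₀, Finset.mem_singleton] at this
  exact hk this

end Count

end FCT

/-- Equal local dimensions `dᵢ = d`, `n ≥ 4`: the full correlation tensor of a
pure state on `(ℂ^d)^{⊗n}` satisfies
`‖T‖² ≤ dⁿ − (n/(n−1))d^{n−2} + 1/(n−1) + (1/(n−2))(n/(n−1) − (n/(n−1))d^{n−2})`,
and this bound improves the bound `dⁿ − (n/(n−1))d^{n−2} + 1/(n−1)` by at least
`(n/((n−1)(n−2)))(d^{n−2} − 1)`. -/
theorem full_corr_tensor_bound_equal_dims (n : ℕ) (hn : 4 ≤ n) (d₀ : ℕ)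
    [NeZero d₀] (hd : (1 : ℝ) ≤ (d₀ : ℝ) ^ (n - 2)) (ω : Fin n → ℂ)
    (hω : ∀ i, IsPrimitiveRoot (ω i) d₀)
    (ψ : (∀ _ : Fin n, ZMod d₀) → ℂ) (hψ : ∑ v, ‖ψ v‖ ^ 2 = 1)
    (ρ : Matrix (∀ _ : Fin n, ZMod d₀) (∀ _ : Fin n, ZMod d₀) ℂ)
    (hρ : ρ = Matrix.vecMulVec ψ (star ψ)) :
    Asum n (fun _ => d₀) ω ρ n ≤
      (d₀ : ℝ) ^ n - ((n : ℝ) / ((n : ℝ) - 1)) * (d₀ : ℝ) ^ (n - 2) +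
        1 / ((n : ℝ) - 1) +
      (1 / ((n : ℝ) - 2)) *
        ((n : ℝ) / ((n : ℝ) - 1) - ((n : ℝ) / ((n : ℝ) - 1)) * (d₀ : ℝ) ^ (n - 2)) ∧
    (d₀ : ℝ) ^ n - ((n : ℝ) / ((n : ℝ) - 1)) * (d₀ : ℝ) ^ (n - 2) +
        1 / ((n : ℝ) - 1) +
      (1 / ((n : ℝ) - 2)) *
        ((n : ℝ) / ((n : ℝ) - 1) - ((n : ℝ) / ((n : ℝ) - 1)) * (d₀ : ℝ) ^ (n - 2)) ≤
      ((d₀ : ℝ) ^ n - ((n : ℝ) / ((n : ℝ) - 1)) * (d₀ : ℝ) ^ (n - 2) +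
        1 / ((n : ℝ) - 1)) -
        ((n : ℝ) / (((n : ℝ) - 1) * ((n : ℝ) - 2))) * ((d₀ : ℝ) ^ (n - 2) - 1) := by
  classical
  have hn1 : (4 : ℝ) ≤ (n : ℝ) := by exact_mod_cast hn
  have h1 : (n : ℝ) - 1 ≠ 0 := by linarith
  have h2 : (n : ℝ) - 2 ≠ 0 := by linarith
  have h2pos : (0 : ℝ) < (n : ℝ) - 2 := by linarith
  set t : ℝ := (d₀ : ℝ) ^ (n - 2) with hts
  refine ⟨?_, by apply le_of_eq; field_simp; ring⟩
  set F : (Fin n → ZMod d₀ × ZMod d₀) → ℝ := fun a => ‖FCT.corrF ω ψ a‖ ^ 2 with hF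
  have hFnn : ∀ a, 0 ≤ F a := fun a => sq_nonneg _
  have hAsum : Asum n (fun _ => d₀) ω ρ n
      = ∑ a ∈ Finset.univ.filter
          (fun a : Fin n → ZMod d₀ × ZMod d₀ =>
            (Finset.univ.filter fun i => a i ≠ 0).card = n), F a :=
    Finset.sum_congr rfl fun a _ => by rw [hF]; rw [FCT.corrN_eq ω ψ ρ hρ a]
  have htot : ∑ a : Fin n → ZMod d₀ × ZMod d₀, F a = (d₀ : ℝ) ^ n :=
    FCT.sum_total ω ψ hω hψ
  have hF0 : F 0 = 1 := by
    rw [hF]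
    show ‖FCT.corrF ω ψ 0‖ ^ 2 = 1
    rw [FCT.corrF_zero ω ψ hψ]
    norm_num
  -- master identity
  have master : ∑ a : Fin n → ZMod d₀ × ZMod d₀,
        ((Finset.univ.filter (fun i => a i = 0)).card : ℝ) * F a
      = t * ∑ a : Fin n → ZMod d₀ × ZMod d₀,
        ((Finset.univ.filter (fun i : Fin n => ∀ k, k ≠ i → a k = 0)).card : ℝ) * F a := by
    rw [← FCT.swap_count (fun i a => a i = 0) F,
      ← FCT.swap_count (fun i (a : Fin n → ZMod d₀ × ZMod d₀) => ∀ k, k ≠ i → a k = 0) F,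
      Finset.mul_sum]
    exact Finset.sum_congr rfl fun i _ => FCT.per_party ω ψ (by omega) hω i
  -- partition
  set Pn : (Fin n → ZMod d₀ × ZMod d₀) → Prop :=
    fun a => (Finset.univ.filter fun i => a i ≠ 0).card = n with hPn
  have h0notPn : ¬ Pn 0 := by
    rw [hPn]
    simp only [FCT.s_zero]
    omega
  have h0mem : (0 : Fin n → ZMod d₀ × ZMod d₀)
      ∈ Finset.univ.filter (fun a => ¬ Pn a) :=
    Finset.mem_filter.2 ⟨Finset.mem_univ _, h0notPn⟩
  have hsplit : ∀ G : (Fin n → ZMod d₀ × ZMod d₀) → ℝ,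
      ∑ a : Fin n → ZMod d₀ × ZMod d₀, G a
        = (∑ a ∈ Finset.univ.filter Pn, G a) + (G 0 +
          ∑ a ∈ (Finset.univ.filter (fun a => ¬ Pn a)).erase 0, G a) := by
    intro G
    rw [← Finset.sum_filter_add_sum_filter_not Finset.univ Pn G,
      ← Finset.add_sum_erase _ G h0mem]
  set c₀ : (Fin n → ZMod d₀ × ZMod d₀) → ℕ :=
    fun a => (Finset.univ.filter (fun i => a i = 0)).card with hc₀
  set c₁ : (Fin n → ZMod d₀ × ZMod d₀) → ℕ :=
    fun a => (Finset.univ.filter (fun i : Fin n => ∀ k, k ≠ i → a k = 0)).card with hc₁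
  set G : (Fin n → ZMod d₀ × ZMod d₀) → ℝ :=
    fun a => ((c₀ a : ℝ) - t * (c₁ a : ℝ)) * F a with hG
  have hGsum : ∑ a : Fin n → ZMod d₀ × ZMod d₀, G a = 0 := by
    have : ∀ a : Fin n → ZMod d₀ × ZMod d₀,
        G a = (c₀ a : ℝ) * F a - t * ((c₁ a : ℝ) * F a) := by
      intro a; rw [hG]; ring
    rw [Finset.sum_congr rfl fun a _ => this a, Finset.sum_sub_distrib, ← Finset.mul_sum]
    simp only [hc₀, hc₁]
    rw [master, sub_self]
  have hG0 : G 0 = (n : ℝ) - t * (n : ℝ) := by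
    show ((c₀ 0 : ℝ) - t * (c₁ 0 : ℝ)) * F 0 = _
    have e0 : c₀ 0 = n := by
      simp only [hc₀]
      rw [FCT.card_zero_filter, FCT.s_zero]
      omega
    have e1 : c₁ 0 = n := by
      simp only [hc₁]
      exact FCT.c1_zero
    rw [hF0, mul_one, e0, e1]
  set An : ℝ := ∑ a ∈ Finset.univ.filter Pn, F a with hAn
  set Mid : ℝ := ∑ a ∈ (Finset.univ.filter (fun a => ¬ Pn a)).erase 0, F a with hMid
  have htot' : (d₀ : ℝ) ^ n = An + (1 + Mid) := by
    rw [← htot, hsplit F, hF0]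
  have hb1 : ∑ a ∈ Finset.univ.filter Pn, G a ≤ 0 := by
    refine Finset.sum_nonpos fun a ha => ?_
    have haP : Pn a := (Finset.mem_filter.1 ha).2
    simp only [hPn] at haP
    have hc0a : c₀ a = 0 := by
      simp only [hc₀]
      rw [FCT.card_zero_filter, haP, Nat.sub_self]
    show ((c₀ a : ℝ) - t * (c₁ a : ℝ)) * F a ≤ 0
    rw [hc0a]
    refine mul_nonpos_of_nonpos_of_nonneg ?_ (hFnn a)
    have : (0 : ℝ) ≤ t * (c₁ a : ℝ) :=
      mul_nonneg (by linarith) (Nat.cast_nonneg _)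
    push_cast
    linarith
  have hb2 : ∑ a ∈ (Finset.univ.filter (fun a => ¬ Pn a)).erase 0, G a
      ≤ ((n : ℝ) - 2) * Mid := by
    rw [hMid, Finset.mul_sum]
    refine Finset.sum_le_sum fun a ha => ?_
    have hane : a ≠ 0 := (Finset.mem_erase.1 ha).1
    have hanP : ¬ Pn a := (Finset.mem_filter.1 (Finset.mem_erase.1 ha).2).2
    simp only [hPn] at hanP
    set s := (Finset.univ.filter (fun i => a i ≠ 0)).card with hs
    have hsle : s ≤ n := FCT.s_le a
    have hspos : 1 ≤ s := FCT.s_pos a hane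
    have hsn : s ≠ n := hanP
    have hc0a : (c₀ a : ℝ) = (n : ℝ) - (s : ℝ) := by
      simp only [hc₀]
      rw [FCT.card_zero_filter]
      rw [Nat.cast_sub (FCT.s_le a)]
    have hcoef : (c₀ a : ℝ) - t * (c₁ a : ℝ) ≤ (n : ℝ) - 2 := by
      rcases eq_or_lt_of_le hspos with hs1 | hs2
      · -- s = 1
        have hc1a : 1 ≤ (c₁ a : ℝ) := by
          have := FCT.c1_of_s_one a hs1.symm
          exact_mod_cast this
        have htc1 : (1 : ℝ) ≤ t * (c₁ a : ℝ) := by nlinarith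
        have hscast : (s : ℝ) = 1 := by exact_mod_cast hs1.symm
        rw [hc0a, hscast]
        linarith
      · -- 2 ≤ s
        have hscast : (2 : ℝ) ≤ (s : ℝ) := by exact_mod_cast hs2
        have htc1 : (0 : ℝ) ≤ t * (c₁ a : ℝ) :=
          mul_nonneg (by linarith) (Nat.cast_nonneg _)
        rw [hc0a]
        linarith
    show ((c₀ a : ℝ) - t * (c₁ a : ℝ)) * F a ≤ ((n : ℝ) - 2) * F a
    exact mul_le_mul_of_nonneg_right hcoef (hFnn a)
  have hmaster_ineq : t * (n : ℝ) - (n : ℝ) ≤ ((n : ℝ) - 2) * Mid := by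
    have := hsplit G
    rw [hGsum, hG0] at this
    linarith
  -- finish
  rw [hAsum]
  have hRHS : (d₀ : ℝ) ^ n - ((n : ℝ) / ((n : ℝ) - 1)) * t + 1 / ((n : ℝ) - 1) +
      (1 / ((n : ℝ) - 2)) * ((n : ℝ) / ((n : ℝ) - 1) - ((n : ℝ) / ((n : ℝ) - 1)) * t)
      = ((d₀ : ℝ) ^ n - 1) - ((n : ℝ) * (t - 1)) / ((n : ℝ) - 2) := by
    field_simp
    ring
  rw [hRHS]
  have hdiv : ((n : ℝ) * (t - 1)) / ((n : ℝ) - 2) ≤ Mid := by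
    rw [div_le_iff₀ h2pos]
    nlinarith
  linarith
end

section
/- (Werner-type GHZ four-qubit example, bipartition non-separability) Let ρ(x) = x|ψ⟩⟨ψ| + ((1−x)/16) I₁₆ on (ℂ²)^{⊗4}, where |ψ⟩ = (|0000⟩ + |1111⟩)/√2 and 0 ≤ x ≤ 1. With α = β = 1, the trace norm of N^{1|234}(ρ(x)) = S₀^{1|2} + S^{1|234} equals (4 + √2)x. Hence if (4+√2)x > 3, i.e. x > 3/(4+√2) ≈ 0.5541, then ρ(x) is not separable across the bipartition 1|234. -/
open Matrix Kronecker ComplexOrder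

/-- The trace norm `‖A‖_tr = tr √(A Aᴴ)`. -/
noncomputable def traceNorm {m n : Type*} [Fintype m] [Fintype n] [DecidableEq m]
    (A : Matrix m n ℂ) : ℝ :=
  (((Matrix.posSemidef_self_mul_conjTranspose A).1.eigenvectorUnitary : Matrix m m ℂ) *
    Matrix.diagonal (((↑) : ℝ → ℂ) ∘ (√·) ∘ (Matrix.posSemidef_self_mul_conjTranspose A).1.eigenvalues) *
    (star (Matrix.posSemidef_self_mul_conjTranspose A).1.eigenvectorUnitary : Matrix m m ℂ)).trace.re

/-- The four-qubit GHZ unit vector `|ψ⟩ = (|0000⟩ + |1111⟩)/√2`, with the first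
qubit split off from the remaining three. -/
noncomputable def ghz4 : (ZMod 2 × ∀ _ : Fin 3, ZMod 2) → ℂ :=
  fun v => if v = (0, fun _ => 0) then (Real.sqrt 2)⁻¹
    else if v = (1, fun _ => 1) then (Real.sqrt 2)⁻¹ else 0

/-- The Werner-type GHZ four-qubit state `ρ(x) = x|ψ⟩⟨ψ| + ((1−x)/16) I₁₆`. -/
noncomputable def wernerGHZ (x : ℝ) :
    Matrix (ZMod 2 × ∀ _ : Fin 3, ZMod 2) (ZMod 2 × ∀ _ : Fin 3, ZMod 2) ℂ :=
  (x : ℂ) • Matrix.vecMulVec ghz4 (star ghz4) + (((1 - x) / 16 : ℝ) : ℂ) • 1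

/-- The matrix `N^{1|234} = S₀^{1|2} + S^{1|234}` of `ρ(x)` (with `α = β = 1`):
the two-body block between qubits 1 and 2 zero-padded, plus the full four-body
correlation matrix with rows indexed by qubit 1. -/
noncomputable def Nghz (ω₀ : ℂ) (ω : Fin 3 → ℂ) (x : ℝ) :
    Matrix (ZMod 2 × ZMod 2) (∀ _ : Fin 3, ZMod 2 × ZMod 2) ℂ :=
  Matrix.of fun a c =>
    (if a ≠ 0 ∧ c 0 ≠ 0 ∧ (∀ j, j ≠ 0 → c j = 0) then
        Matrix.trace (wernerGHZ x *
          ((Weyl 2 ω₀ a.1 a.2) ⊗ₖ (WeylT 3 (fun _ => 2) ω c))ᴴ) else 0) +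
    (if a ≠ 0 ∧ (∀ j, c j ≠ 0) then
        Matrix.trace (wernerGHZ x *
          ((Weyl 2 ω₀ a.1 a.2) ⊗ₖ (WeylT 3 (fun _ => 2) ω c))ᴴ) else 0)

/-- Separability of a state on `ℂ² ⊗ (ℂ²)^{⊗3}` across the bipartition `1|234`. -/
def Sep1vs234 (σ : Matrix (ZMod 2 × ∀ _ : Fin 3, ZMod 2)
    (ZMod 2 × ∀ _ : Fin 3, ZMod 2) ℂ) : Prop :=
  ∃ (k : ℕ) (p : Fin k → ℝ) (τ₁ : Fin k → Matrix (ZMod 2) (ZMod 2) ℂ)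
    (τR : Fin k → Matrix (∀ _ : Fin 3, ZMod 2) (∀ _ : Fin 3, ZMod 2) ℂ),
    (∀ s, 0 < p s) ∧ (∑ s, p s = 1) ∧
    (∀ s, (τ₁ s).PosSemidef ∧ (τ₁ s).trace = 1) ∧
    (∀ s, (τR s).PosSemidef ∧ (τR s).trace = 1) ∧
    σ = ∑ s, (p s : ℂ) • ((τ₁ s) ⊗ₖ (τR s))

/-! ### Auxiliary lemmas -/

lemma zmod2_cases (i : ZMod 2) : i = 0 ∨ i = 1 := by revert i; decide

lemma zmod2_11 : (1 + 1 : ZMod 2) = 0 := by decide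

lemma zmod2_sum {M : Type*} [AddCommMonoid M] (f : ZMod 2 → M) :
    ∑ p : ZMod 2, f p = f 0 + f 1 := by
  rw [show (Finset.univ : Finset (ZMod 2)) = {0, 1} from by decide]
  rw [Finset.sum_insert (by decide), Finset.sum_singleton]

lemma fin3_forall (P : Fin 3 → Prop) : (∀ j, P j) ↔ P 0 ∧ P 1 ∧ P 2 :=
  ⟨fun h => ⟨h 0, h 1, h 2⟩, by rintro ⟨h0, h1, h2⟩ j; fin_cases j <;> assumption⟩

/-- The nontrivial character of `ZMod 2`, valued in `ℂ`. -/
noncomputable def chi (i : ZMod 2) : ℂ := if i = 0 then 1 else -1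

lemma chi_pow (i : ZMod 2) : (-1 : ℂ) ^ i.val = chi i := by
  rcases zmod2_cases i with rfl | rfl <;> simp [chi, ZMod.val_one]

lemma chi_add (i j : ZMod 2) : chi (i + j) = chi i * chi j := by
  rcases zmod2_cases i with rfl | rfl <;> rcases zmod2_cases j with rfl | rfl <;>
    simp [chi, zmod2_11]

lemma star_chi (i : ZMod 2) : star (chi i) = chi i := by
  rcases zmod2_cases i with rfl | rfl <;> simp [chi]

lemma Weyl_apply (i j p q : ZMod 2) :
    Weyl 2 (-1) i j p q = if q = p + j then chi (i * p) else 0 := by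
  rw [Weyl]
  rw [Matrix.sum_apply]
  rw [Finset.sum_eq_single p (fun m _ hm => by
    simp only [Matrix.single, Matrix.smul_apply, Matrix.of_apply, smul_eq_mul]
    rw [if_neg (by tauto)]
    exact mul_zero _) (by simp)]
  simp [Matrix.single, Matrix.smul_apply, chi_pow]
  split_ifs with h1 h2 h2 <;> simp_all [eq_comm]

/-- Equiv used to expand sums over `Fin 3 → β`. -/
def e3 {β : Type*} : β × β × β ≃ (Fin 3 → β) where
  toFun p := ![p.1, p.2.1, p.2.2]
  invFun c := (c 0, c 1, c 2)
  left_inv := by rintro ⟨x, y, z⟩; rfl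
  right_inv := by intro c; funext j; fin_cases j <;> rfl

lemma sum_fn3 {β M : Type*} [Fintype β] [DecidableEq β] [AddCommMonoid M]
    (f : (Fin 3 → β) → M) :
    ∑ c, f c = ∑ p : β × β × β, f ![p.1, p.2.1, p.2.2] :=
  (Equiv.sum_comp e3 f).symm

/-- Single-qubit Weyl matrix entries. -/
noncomputable def wE (p : ZMod 2 × ZMod 2) (μ ν : ZMod 2) : ℂ :=
  Weyl 2 (-1) p.1 p.2 μ ν

/-- Single-qubit Weyl matrix trace. -/
noncomputable def tW (p : ZMod 2 × ZMod 2) : ℂ := ∑ μ : ZMod 2, wE p μ μ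

lemma tW_ne {a : ZMod 2 × ZMod 2} (ha : a ≠ 0) : tW a = 0 := by
  obtain ⟨i, j⟩ := a
  simp only [tW, wE, zmod2_sum, Weyl_apply]
  rcases zmod2_cases i with rfl | rfl <;> rcases zmod2_cases j with rfl | rfl <;>
    simp_all [chi, zmod2_11, Prod.ext_iff]

lemma sum4_eq (a b0 b1 b2 : ZMod 2 × ZMod 2) :
    ∑ μ : ZMod 2, ∑ ν : ZMod 2, wE a μ ν * (wE b0 μ ν * (wE b1 μ ν * wE b2 μ ν))
    = (if a.2 = 0 ∧ b0.2 = 0 ∧ b1.2 = 0 ∧ b2.2 = 0 then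
        1 + chi (a.1 + b0.1 + b1.1 + b2.1) else 0)
    + (if a.2 = 1 ∧ b0.2 = 1 ∧ b1.2 = 1 ∧ b2.2 = 1 then
        1 + chi (a.1 + b0.1 + b1.1 + b2.1) else 0) := by
  obtain ⟨a1, a2⟩ := a; obtain ⟨u0, v0⟩ := b0; obtain ⟨u1, v1⟩ := b1; obtain ⟨u2, v2⟩ := b2
  simp only [zmod2_sum, wE, Weyl_apply]
  rcases zmod2_cases a2 with rfl | rfl <;> rcases zmod2_cases v0 with rfl | rfl <;>
    rcases zmod2_cases v1 with rfl | rfl <;> rcases zmod2_cases v2 with rfl | rfl <;>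
      simp [chi_add, zmod2_11, mul_zero, mul_one,
        (by decide : ((0 : ZMod 2) = 0 + 1) = False),
        (by decide : ((1 : ZMod 2) = 1 + 1) = False),
        (by decide : ((1 : ZMod 2) = 0 + 0) = False),
        (by decide : ((0 : ZMod 2) = 1 + 0) = False),
        (by decide : (¬(1 : ZMod 2) = 0)),
        (by decide : (¬(0 : ZMod 2) = 1))] <;>
      simp [chi] <;> ring

lemma ghz4_eq (v : ZMod 2 × ∀ _ : Fin 3, ZMod 2) :
    ghz4 v = ((Real.sqrt 2 : ℝ) : ℂ)⁻¹ *
      ((if v = ((0 : ZMod 2), fun _ => (0 : ZMod 2)) then 1 else 0) +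
       (if v = (1, fun _ => 1) then 1 else 0)) := by
  by_cases h1 : v = ((0 : ZMod 2), fun _ => (0 : ZMod 2)) <;>
    by_cases h2 : v = ((1 : ZMod 2), fun _ => (1 : ZMod 2)) <;>
      simp [ghz4, h1, h2]

lemma sum_pi_weyl (c : ∀ _ : Fin 3, ZMod 2 × ZMod 2) :
    ∑ i2 : (Fin 3 → ZMod 2), ∏ j, Weyl 2 (-1) (c j).1 (c j).2 (i2 j) (i2 j)
      = tW (c 0) * (tW (c 1) * tW (c 2)) := by
  have h := (Finset.prod_univ_sum (t := fun _ : Fin 3 => (Finset.univ : Finset (ZMod 2)))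
    (f := fun j m => Weyl 2 (-1) (c j).1 (c j).2 m m)).symm
  rw [Fintype.piFinset_univ] at h
  rw [h, Fin.prod_univ_three]
  simp [tW, wE, mul_assoc]

lemma traceW (a : ZMod 2 × ZMod 2) (c : ∀ _ : Fin 3, ZMod 2 × ZMod 2) :
    ∑ i : ZMod 2 × (Fin 3 → ZMod 2),
      Weyl 2 (-1) a.1 a.2 i.1 i.1 * ∏ j, Weyl 2 (-1) (c j).1 (c j).2 (i.2 j) (i.2 j)
      = tW a * (tW (c 0) * (tW (c 1) * tW (c 2))) := by
  rw [Fintype.sum_prod_type]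
  simp only [← Finset.mul_sum, ← Finset.sum_mul, sum_pi_weyl]
  rfl

lemma trace_formula (x : ℝ) (a : ZMod 2 × ZMod 2) (c : ∀ _ : Fin 3, ZMod 2 × ZMod 2) :
    Matrix.trace (wernerGHZ x *
      ((Weyl 2 (-1) a.1 a.2) ⊗ₖ (WeylT 3 (fun _ => 2) (fun _ => -1) c))ᴴ)
    = (((1 - x) / 16 : ℝ) : ℂ) * star (tW a * (tW (c 0) * (tW (c 1) * tW (c 2))))
      + (x : ℂ) * (2 : ℂ)⁻¹ * star (∑ μ : ZMod 2, ∑ ν : ZMod 2,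
          wE a μ ν * (wE (c 0) μ ν * (wE (c 1) μ ν * wE (c 2) μ ν))) := by
  have r2 : ((Real.sqrt 2 : ℝ) : ℂ)⁻¹ * ((Real.sqrt 2 : ℝ) : ℂ)⁻¹ = (2 : ℂ)⁻¹ := by
    rw [← mul_inv, ← Complex.ofReal_mul, Real.mul_self_sqrt (by norm_num)]
    norm_num
  rw [Matrix.trace]
  simp only [Matrix.diag_apply, Matrix.mul_apply, Matrix.conjTranspose_apply,
    wernerGHZ, Matrix.add_apply, Matrix.smul_apply, Matrix.vecMulVec_apply,
    Pi.star_apply, Matrix.one_apply, smul_eq_mul, Matrix.kroneckerMap_apply,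
    WeylT, Matrix.of_apply]
  simp only [add_mul, Finset.sum_add_distrib]
  rw [add_comm]
  congr 1
  · simp only [mul_ite, ite_mul, mul_one, mul_zero, zero_mul,
      Finset.sum_ite_eq, Finset.mem_univ, if_true]
    rw [← Finset.mul_sum]
    rw [← star_sum, traceW]
  · rw [show ((x : ℂ) * (2 : ℂ)⁻¹) = (x : ℂ) * (((Real.sqrt 2 : ℝ) : ℂ)⁻¹ *
      ((Real.sqrt 2 : ℝ) : ℂ)⁻¹) from by rw [r2]]
    simp only [ghz4_eq, star_mul', star_add, star_one, star_zero,
      apply_ite (star : ℂ → ℂ), Complex.star_def, map_inv₀, Complex.conj_ofReal,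
      _root_.map_one, _root_.map_zero]
    simp only [mul_add, add_mul, mul_ite, ite_mul, zero_mul, mul_zero, mul_one, one_mul,
      Finset.sum_add_distrib, Finset.sum_ite_eq', Finset.mem_univ, if_true]
    simp only [zmod2_sum, wE, star_add, star_mul', Fin.prod_univ_three, map_add,
      _root_.map_mul]
    ring

/-- The scalar value of the nonvanishing correlation entries. -/
noncomputable def mval (a b0 b1 b2 : ZMod 2 × ZMod 2) : ℂ :=
  (if a.2 = 0 ∧ b0.2 = 0 ∧ b1.2 = 0 ∧ b2.2 = 0 then
      1 + chi (a.1 + b0.1 + b1.1 + b2.1) else 0) / 2 +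
  (if a.2 = 1 ∧ b0.2 = 1 ∧ b1.2 = 1 ∧ b2.2 = 1 then
      1 + chi (a.1 + b0.1 + b1.1 + b2.1) else 0) / 2

lemma trace_eq (x : ℝ) (a : ZMod 2 × ZMod 2) (c : ∀ _ : Fin 3, ZMod 2 × ZMod 2)
    (ha : a ≠ 0) :
    Matrix.trace (wernerGHZ x *
      ((Weyl 2 (-1) a.1 a.2) ⊗ₖ (WeylT 3 (fun _ => 2) (fun _ => -1) c))ᴴ)
    = (x : ℂ) * mval a (c 0) (c 1) (c 2) := by
  rw [trace_formula, tW_ne ha, sum4_eq]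
  simp only [zero_mul, star_zero, mul_zero, zero_add, mval]
  simp only [star_add, apply_ite (star : ℂ → ℂ), star_add, star_one, star_chi, star_zero]
  ring

/-- The rescaled correlation matrix. -/
noncomputable def Mstruct :
    Matrix (ZMod 2 × ZMod 2) (∀ _ : Fin 3, ZMod 2 × ZMod 2) ℂ :=
  Matrix.of fun a c =>
    (if a ≠ 0 ∧ c 0 ≠ 0 ∧ c 1 = 0 ∧ c 2 = 0 then mval a (c 0) (c 1) (c 2) else 0) +
    (if a ≠ 0 ∧ c 0 ≠ 0 ∧ c 1 ≠ 0 ∧ c 2 ≠ 0 then mval a (c 0) (c 1) (c 2) else 0)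

lemma Nghz_eq (x : ℝ) : Nghz (-1) (fun _ => -1) x = (x : ℂ) • Mstruct := by
  ext a c
  have h1 : (∀ j : Fin 3, j ≠ 0 → c j = 0) ↔ (c 1 = 0 ∧ c 2 = 0) := by
    rw [fin3_forall]
    simp [(by decide : (1 : Fin 3) ≠ 0), (by decide : (2 : Fin 3) ≠ 0)]
  have h2 : (∀ j : Fin 3, c j ≠ 0) ↔ (c 0 ≠ 0 ∧ c 1 ≠ 0 ∧ c 2 ≠ 0) := fin3_forall _
  simp only [Nghz, Mstruct, Matrix.of_apply, Matrix.smul_apply, smul_eq_mul, h1, h2,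
    mul_add, mul_ite, mul_zero]
  congr 1
  · split_ifs with h
    · exact trace_eq x a c h.1
    · rfl
  · split_ifs with h
    · exact trace_eq x a c h.1
    · rfl

/-- Diagonal of `M Mᴴ`. -/
noncomputable def dfun : ZMod 2 × ZMod 2 → ℂ := fun a =>
  if a = ((1 : ZMod 2), (0 : ZMod 2)) then 2 else if a = 0 then 0 else 4

/-- Columns supporting the `Z`-row of `Mstruct`. -/
def colA : Fin 3 → ZMod 2 × ZMod 2 := ![(1, 0), 0, 0]
def colB : Fin 3 → ZMod 2 × ZMod 2 := ![(1, 0), (1, 0), (1, 0)]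

lemma funeq3 {β : Type*} (c d : Fin 3 → β) :
    c = d ↔ (c 0 = d 0 ∧ c 1 = d 1 ∧ c 2 = d 2) := by
  rw [funext_iff, fin3_forall]

lemma row_a0 (c : ∀ _ : Fin 3, ZMod 2 × ZMod 2) : Mstruct 0 c = 0 := by
  simp [Mstruct]

lemma row_z_aux (u0 u1 u2 : ZMod 2 × ZMod 2) :
    (if ((1 : ZMod 2), (0 : ZMod 2)) ≠ 0 ∧ u0 ≠ 0 ∧ u1 = 0 ∧ u2 = 0 then
        mval (1, 0) u0 u1 u2 else 0) +
    (if ((1 : ZMod 2), (0 : ZMod 2)) ≠ 0 ∧ u0 ≠ 0 ∧ u1 ≠ 0 ∧ u2 ≠ 0 then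
        mval (1, 0) u0 u1 u2 else 0)
    = (if u0 = (1, 0) ∧ u1 = 0 ∧ u2 = 0 then 1 else 0) +
      (if u0 = (1, 0) ∧ u1 = (1, 0) ∧ u2 = (1, 0) then 1 else 0) := by
  obtain ⟨p0, q0⟩ := u0; obtain ⟨p1, q1⟩ := u1; obtain ⟨p2, q2⟩ := u2
  rcases zmod2_cases p0 with rfl | rfl <;> rcases zmod2_cases q0 with rfl | rfl <;>
    rcases zmod2_cases p1 with rfl | rfl <;> rcases zmod2_cases q1 with rfl | rfl <;>
      rcases zmod2_cases p2 with rfl | rfl <;> rcases zmod2_cases q2 with rfl | rfl <;>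
        · simp only [mval, chi, zmod2_11, add_zero, zero_add, Prod.ext_iff]
          norm_num [(by decide : ¬((1 : ZMod 2) = 0)), (by decide : ¬((0 : ZMod 2) = 1))]

lemma row_z (c : ∀ _ : Fin 3, ZMod 2 × ZMod 2) :
    Mstruct (1, 0) c = (if c = colA then 1 else 0) + (if c = colB then 1 else 0) := by
  simp only [Mstruct, Matrix.of_apply, funeq3 c colA, funeq3 c colB]
  simp only [colA, colB, Matrix.cons_val_zero, Matrix.cons_val_one, Matrix.cons_val_two,
    Matrix.head_cons, Matrix.vecHead, Matrix.vecTail, Function.comp_apply,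
    Fin.succ_zero_eq_one]
  exact row_z_aux (c 0) (c 1) (c 2)

lemma row_x_aux (t : ZMod 2) (u0 u1 u2 : ZMod 2 × ZMod 2) :
    (if (t, (1 : ZMod 2)) ≠ 0 ∧ u0 ≠ 0 ∧ u1 = 0 ∧ u2 = 0 then
        mval (t, 1) u0 u1 u2 else 0) +
    (if (t, (1 : ZMod 2)) ≠ 0 ∧ u0 ≠ 0 ∧ u1 ≠ 0 ∧ u2 ≠ 0 then
        mval (t, 1) u0 u1 u2 else 0)
    = if u0.2 = 1 ∧ u1.2 = 1 ∧ u2.2 = 1 ∧ t + (u0.1 + (u1.1 + u2.1)) = 0 then 1 else 0 := by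
  obtain ⟨p0, q0⟩ := u0; obtain ⟨p1, q1⟩ := u1; obtain ⟨p2, q2⟩ := u2
  rcases zmod2_cases t with rfl | rfl <;>
  rcases zmod2_cases p0 with rfl | rfl <;> rcases zmod2_cases q0 with rfl | rfl <;>
    rcases zmod2_cases p1 with rfl | rfl <;> rcases zmod2_cases q1 with rfl | rfl <;>
      rcases zmod2_cases p2 with rfl | rfl <;> rcases zmod2_cases q2 with rfl | rfl <;>
        · simp only [mval, chi, zmod2_11, add_zero, zero_add, Prod.ext_iff]
          norm_num [(by decide : ¬((1 : ZMod 2) = 0)), (by decide : ¬((0 : ZMod 2) = 1))]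

lemma row_x (t : ZMod 2) (c : ∀ _ : Fin 3, ZMod 2 × ZMod 2) :
    Mstruct (t, 1) c =
      if (c 0).2 = 1 ∧ (c 1).2 = 1 ∧ (c 2).2 = 1 ∧
          t + ((c 0).1 + ((c 1).1 + (c 2).1)) = 0 then 1 else 0 := by
  simp only [Mstruct, Matrix.of_apply]
  exact row_x_aux t (c 0) (c 1) (c 2)

lemma row_a0' (c : ∀ _ : Fin 3, ZMod 2 × ZMod 2) :
    Mstruct ((0 : ZMod 2), (0 : ZMod 2)) c = 0 := by
  simp [Mstruct, Prod.ext_iff]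

lemma ite_add_distrib {P : Prop} [Decidable P] (a b : ℂ) :
    (if P then a + b else 0) = (if P then a else 0) + (if P then b else 0) := by
  split_ifs <;> simp

set_option maxHeartbeats 1000000 in
lemma MMH : Mstruct * Mstructᴴ = Matrix.diagonal dfun := by
  ext a b
  rw [Matrix.mul_apply]
  simp only [Matrix.conjTranspose_apply]
  obtain ⟨a1, a2⟩ := a; obtain ⟨b1, b2⟩ := b
  rcases zmod2_cases a2 with rfl | rfl <;> rcases zmod2_cases b2 with rfl | rfl <;>
    rcases zmod2_cases a1 with rfl | rfl <;> rcases zmod2_cases b1 with rfl | rfl <;>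
      simp only [row_a0', row_z, row_x, star_zero, mul_zero, zero_mul, map_zero,
        apply_ite (star : ℂ → ℂ), star_one, add_mul, mul_add, ite_mul, mul_ite,
        one_mul, mul_one, ite_self, Finset.sum_const_zero, Finset.sum_add_distrib,
        ite_add_distrib, ← ite_and, and_self, Finset.sum_ite_eq', Finset.mem_univ,
        if_true]
  all_goals try simp only [ite_add_distrib, ← ite_and, and_self, Finset.sum_add_distrib,
    Finset.sum_ite_eq', Finset.mem_univ, if_true]
  all_goals try rw [Finset.sum_boole]
  all_goals try rw [Finset.sum_boole]
  all_goals
    simp (config := { decide := true }) [dfun, Matrix.diagonal_apply, Prod.ext_iff,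
      colA, colB]
  all_goals try norm_num
  all_goals try norm_cast
  all_goals try decide
  all_goals
    refine Finset.sum_eq_zero fun c _ => ?_
    split_ifs with h <;> simp_all [funeq3, Prod.ext_iff]

lemma NNH (x : ℝ) :
    Nghz (-1) (fun _ => -1) x * (Nghz (-1) (fun _ => -1) x)ᴴ
      = Matrix.diagonal (fun a => ((x : ℂ) * (x : ℂ)) * dfun a) := by
  rw [Nghz_eq, Matrix.conjTranspose_smul,
    show (star ((x : ℂ))) = (x : ℂ) from by simp [Complex.star_def, Complex.conj_ofReal],
    Matrix.smul_mul, Matrix.mul_smul, MMH, smul_smul]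
  ext i j
  rw [Matrix.smul_apply, Matrix.diagonal_apply, Matrix.diagonal_apply]
  split_ifs <;> simp

/-- entries of the square root of `N Nᴴ`. -/
noncomputable def sfn (x : ℝ) : ZMod 2 × ZMod 2 → ℂ := fun a =>
  ((x * (if a = ((1 : ZMod 2), (0 : ZMod 2)) then Real.sqrt 2
      else if a = 0 then 0 else 2) : ℝ) : ℂ)

lemma sfn_PSD (x : ℝ) (hx0 : 0 ≤ x) : (Matrix.diagonal (sfn x)).PosSemidef :=
  Matrix.posSemidef_diagonal_iff.mpr fun a => Complex.zero_le_real.mpr <| by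
    have := Real.sqrt_nonneg 2
    split_ifs <;> positivity

lemma sfn_sq (x : ℝ) :
    (Matrix.diagonal (sfn x)) ^ 2
      = Nghz (-1) (fun _ => -1) x * (Nghz (-1) (fun _ => -1) x)ᴴ := by
  rw [pow_two, Matrix.diagonal_mul_diagonal, NNH]
  refine congrArg Matrix.diagonal (funext fun a => ?_)
  simp only [sfn, dfun]
  split_ifs with h1 h2
  · rw [← Complex.ofReal_mul,
      show (x * Real.sqrt 2) * (x * Real.sqrt 2) = x * x * (Real.sqrt 2 * Real.sqrt 2)
        from by ring,
      Real.mul_self_sqrt (by norm_num)]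
    push_cast
    ring
  · push_cast; ring
  · push_cast; ring

lemma traceNorm_eval (x : ℝ) (hx0 : 0 ≤ x) :
    traceNorm (Nghz (-1) (fun _ => -1) x) = (4 + Real.sqrt 2) * x := by
  have hH := (Matrix.posSemidef_self_mul_conjTranspose (Nghz (-1) (fun _ => -1) x)).1
  have hc : traceNorm (Nghz (-1) (fun _ => -1) x)
      = (cfc Real.sqrt (Nghz (-1) (fun _ => -1) x * (Nghz (-1) (fun _ => -1) x)ᴴ)).trace.re := by
    rw [hH.cfc_eq, Matrix.IsHermitian.cfc, Unitary.conjStarAlgAut_apply]; rfl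
  have hs : cfc Real.sqrt (Nghz (-1) (fun _ => -1) x * (Nghz (-1) (fun _ => -1) x)ᴴ)
      = Matrix.diagonal (sfn x) := by
    open scoped MatrixOrder in
    rw [← cfcₙ_eq_cfc (hf0 := by simp), ← CFC.sqrt_eq_real_sqrt _
      (Matrix.posSemidef_self_mul_conjTranspose (Nghz (-1) (fun _ => -1) x)).nonneg]
    open scoped MatrixOrder in
    exact CFC.sqrt_unique (by rw [← pow_two, sfn_sq]) (sfn_PSD x hx0).nonneg
  rw [hc, hs,
    Matrix.trace_diagonal, Fintype.sum_prod_type]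
  simp only [zmod2_sum]
  simp (config := { decide := true }) [sfn]
  ring

/-! ### Separability part -/

/-- The PPT witness vector `|0111⟩ - |1000⟩`. -/
noncomputable def vv : (ZMod 2 × ∀ _ : Fin 3, ZMod 2) → ℂ := fun q =>
  (if q = ((0 : ZMod 2), fun _ => (1 : ZMod 2)) then 1 else 0) -
  (if q = ((1 : ZMod 2), fun _ => (0 : ZMod 2)) then 1 else 0)

/-- The quadratic functional `⟨v| σ^{T₁} |v⟩`. -/
noncomputable def Lfun (σ : Matrix (ZMod 2 × ∀ _ : Fin 3, ZMod 2)
    (ZMod 2 × ∀ _ : Fin 3, ZMod 2) ℂ) : ℂ :=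
  ∑ t : (ZMod 2 × ∀ _ : Fin 3, ZMod 2) × (ZMod 2 × ∀ _ : Fin 3, ZMod 2),
    star (vv t.1) * σ (t.2.1, t.1.2) (t.1.1, t.2.2) * vv t.2

lemma L_sum {k : ℕ} (w : Fin k → ℂ)
    (A : Fin k → Matrix (ZMod 2 × ∀ _ : Fin 3, ZMod 2)
      (ZMod 2 × ∀ _ : Fin 3, ZMod 2) ℂ) :
    Lfun (∑ s, w s • A s) = ∑ s, w s * Lfun (A s) := by
  simp only [Lfun, Matrix.sum_apply, Matrix.smul_apply, smul_eq_mul, Finset.mul_sum,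
    Finset.sum_mul]
  rw [Finset.sum_comm]
  exact Finset.sum_congr rfl fun s _ => Finset.sum_congr rfl fun t _ => by ring

lemma kronecker_conjT {l m n p : Type*} [Fintype l] [Fintype m] [Fintype n] [Fintype p]
    (A : Matrix l m ℂ) (B : Matrix n p ℂ) : (A ⊗ₖ B)ᴴ = Aᴴ ⊗ₖ Bᴴ := by
  ext i j
  simp [Matrix.conjTranspose_apply, Matrix.kroneckerMap_apply, star_mul', mul_comm]

lemma kron_psd {n m : Type*} [Fintype n] [Fintype m] [DecidableEq n] [DecidableEq m]
    {A : Matrix n n ℂ} {B : Matrix m m ℂ}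
    (hA : A.PosSemidef) (hB : B.PosSemidef) : (A ⊗ₖ B).PosSemidef := by
  exact hA.kronecker hB

lemma L_prod (τ₁ : Matrix (ZMod 2) (ZMod 2) ℂ)
    (τR : Matrix (∀ _ : Fin 3, ZMod 2) (∀ _ : Fin 3, ZMod 2) ℂ)
    (h1 : τ₁.PosSemidef) (hR : τR.PosSemidef) : 0 ≤ Lfun (τ₁ ⊗ₖ τR) := by
  have key : Lfun (τ₁ ⊗ₖ τR) = star vv ⬝ᵥ ((τ₁ᵀ ⊗ₖ τR) *ᵥ vv) := by
    rw [Lfun, Fintype.sum_prod_type]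
    simp only [dotProduct, Matrix.mulVec, Pi.star_apply, Matrix.kroneckerMap_apply,
      Matrix.transpose_apply, Finset.mul_sum, dotProduct]
    exact Finset.sum_congr rfl fun p _ => Finset.sum_congr rfl fun q _ => by ring
  rw [key]
  exact (kron_psd h1.transpose hR).dotProduct_mulVec_nonneg vv

lemma L_werner (x : ℝ) : Lfun (wernerGHZ x) = (((1 - 9 * x) / 8 : ℝ) : ℂ) := by
  have r2 : ((Real.sqrt 2 : ℝ) : ℂ)⁻¹ * ((Real.sqrt 2 : ℝ) : ℂ)⁻¹ = (2 : ℂ)⁻¹ := by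
    rw [← mul_inv, ← Complex.ofReal_mul, Real.mul_self_sqrt (by norm_num)]
    norm_num
  rw [Lfun]
  simp only [vv, wernerGHZ, Matrix.add_apply, Matrix.smul_apply, Matrix.vecMulVec_apply,
    Pi.star_apply, Matrix.one_apply, smul_eq_mul, star_sub,
    apply_ite (star : ℂ → ℂ), star_one, star_zero, sub_mul, mul_sub, ite_mul, mul_ite,
    one_mul, mul_one, zero_mul, mul_zero, Finset.sum_sub_distrib,
    Fintype.sum_prod_type, Finset.sum_ite_eq', Finset.mem_univ, if_true]
  simp (config := { decide := true }) [ghz4, Complex.star_def, map_inv₀,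
    Complex.conj_ofReal]
  push_cast
  linear_combination (-2 * (x : ℂ)) * r2

/-- Example 2: for `ρ(x) = x|GHZ₄⟩⟨GHZ₄| + ((1−x)/16)I₁₆` and `α = β = 1`,
`‖N^{1|234}‖_tr = (4+√2)x`; hence if `(4+√2)x > 3` then `ρ(x)` is not separable
across the bipartition `1|234`. -/
theorem ghz4_example (ω₀ : ℂ) (ω : Fin 3 → ℂ) (hω₀ : IsPrimitiveRoot ω₀ 2)
    (hω : ∀ j, IsPrimitiveRoot (ω j) 2) (x : ℝ) (hx0 : 0 ≤ x) (hx1 : x ≤ 1) :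
    traceNorm (Nghz ω₀ ω x) = (4 + Real.sqrt 2) * x ∧
    ((4 + Real.sqrt 2) * x > 3 → ¬ Sep1vs234 (wernerGHZ x)) := by
  have h0 : ω₀ = -1 := hω₀.eq_neg_one_of_two_right
  have h1 : ω = fun _ => -1 := funext fun j => (hω j).eq_neg_one_of_two_right
  subst h0 h1
  refine ⟨traceNorm_eval x hx0, fun hgt hsep => ?_⟩
  obtain ⟨k, p, τ₁, τR, hp, hps, hτ₁, hτR, hσ⟩ := hsep
  have hL : (0 : ℂ) ≤ Lfun (wernerGHZ x) := by
    rw [hσ, L_sum]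
    exact Finset.sum_nonneg fun s _ => mul_nonneg (Complex.zero_le_real.mpr (hp s).le)
      (L_prod _ _ (hτ₁ s).1 (hτR s).1)
  rw [L_werner] at hL
  have hL' : (0 : ℝ) ≤ (1 - 9 * x) / 8 := Complex.zero_le_real.mp hL
  have hs2 : Real.sqrt 2 < 2 := by
    nlinarith [Real.sq_sqrt (show (0:ℝ) ≤ 2 by norm_num), Real.sqrt_nonneg 2]
  nlinarith
end
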